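/- Under simple random sampling without replacement of a sample s of size n from a finite population U of size N, the expected value of the out-of-sample loss D_s = Σ_{j∈U\s} (μ(s) − y_j)², where μ(s) = (1/n) Σ_{i∈s} y_i, equals (N−n)(1 + 1/n) S_y², where S_y² = Σ_{i∈U} (y_i − Ȳ)²/(N−1) and Ȳ = (1/N) Σ_{i∈U} y_i. -/
import Mathlib

open Finset

section Aux

variable {ι : Type*} [Fintype ι] [DecidableEq ι]

lemma count_key {ι : Type*} [DecidableEq ι] (u t : Finset ι) (ht : t ⊆ u) (n : ℕ)
    (htn : t.card ≤ n) :
    ((u.powersetCard n).filter (fun s => t ⊆ s)).card = (u.card - t.card).choose (n - t.card) := by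
  rw [← Finset.card_sdiff_of_subset ht, ← Finset.card_powersetCard (n - t.card) (u \ t)]
  apply Finset.card_bij' (fun s _ => s \ t) (fun r _ => r ∪ t)
  · intro s hs
    simp only [mem_filter, mem_powersetCard] at hs
    obtain ⟨⟨hsu, hsc⟩, hts⟩ := hs
    simp only [mem_powersetCard]
    exact ⟨sdiff_subset_sdiff hsu Subset.rfl, by rw [card_sdiff_of_subset hts, hsc]⟩
  · intro r hr
    simp only [mem_powersetCard] at hr
    obtain ⟨hru, hrc⟩ := hr
    have hd : Disjoint r t := disjoint_of_subset_left hru sdiff_disjoint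
    simp only [mem_filter, mem_powersetCard]
    refine ⟨⟨union_subset (hru.trans sdiff_subset) ht, ?_⟩, subset_union_right⟩
    rw [card_union_of_disjoint hd, hrc, Nat.sub_add_cancel htn]
  · intro s hs
    simp only [mem_filter, mem_powersetCard] at hs
    exact sdiff_union_of_subset hs.2
  · intro r hr
    simp only [mem_powersetCard] at hr
    have hd : Disjoint r t := disjoint_of_subset_left hr.1 sdiff_disjoint
    rw [union_sdiff_right, sdiff_eq_self_of_disjoint hd]

lemma cin (N n : ℕ) (hN : Fintype.card ι = N) (hn : 1 ≤ n) (i : ι) :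
    (((univ : Finset ι).powersetCard n).filter (fun s => i ∈ s)).card
      = (N-1).choose (n-1) := by
  have h : ((univ : Finset ι).powersetCard n).filter (fun s => i ∈ s)
      = ((univ : Finset ι).powersetCard n).filter (fun s => {i} ⊆ s) := by
    ext s; simp
  rw [h, count_key univ {i} (by simp) n (by simpa using hn)]
  simp [card_univ, hN]

lemma cout (N n : ℕ) (hN : Fintype.card ι = N) (j : ι) :
    (((univ : Finset ι).powersetCard n).filter (fun s => j ∉ s)).card
      = (N-1).choose n := by
  have h : ((univ : Finset ι).powersetCard n).filter (fun s => j ∉ s)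
      = (univ.erase j).powersetCard n := by
    ext s; simp [mem_powersetCard, subset_erase]; tauto
  rw [h, card_powersetCard, card_erase_of_mem (mem_univ j), card_univ, hN]

lemma cmix (N n : ℕ) (hN : Fintype.card ι = N) (hn : 1 ≤ n) {i j : ι} (hij : i ≠ j) :
    (((univ : Finset ι).powersetCard n).filter (fun s => i ∈ s ∧ j ∉ s)).card
      = (N-2).choose (n-1) := by
  have h : ((univ : Finset ι).powersetCard n).filter (fun s => i ∈ s ∧ j ∉ s)
      = ((univ.erase j).powersetCard n).filter (fun s => {i} ⊆ s) := by
    ext s; simp [mem_powersetCard, subset_erase, singleton_subset_iff]; tauto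
  rw [h, count_key (univ.erase j) {i} (by simpa using hij) n (by simpa using hn)]
  rw [card_erase_of_mem (mem_univ j), card_univ, hN, card_singleton]
  congr 1

lemma cpair (N n : ℕ) (hN : Fintype.card ι = N) (hn : 1 ≤ n) {i j : ι} (hij : i ≠ j) :
    (((univ : Finset ι).powersetCard n).filter (fun s => i ∈ s ∧ j ∈ s)).card
      + (N-2).choose (n-1) = (N-1).choose (n-1) := by
  rw [← cmix N n hN hn hij, ← cin N n hN hn i]
  have h1 : ((univ : Finset ι).powersetCard n).filter (fun s => i ∈ s ∧ j ∈ s)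
      = (((univ : Finset ι).powersetCard n).filter (fun s => i ∈ s)).filter (fun s => j ∈ s) := by
    rw [filter_filter]
  have h2 : ((univ : Finset ι).powersetCard n).filter (fun s => i ∈ s ∧ j ∉ s)
      = (((univ : Finset ι).powersetCard n).filter (fun s => i ∈ s)).filter (fun s => j ∉ s) := by
    rw [filter_filter]
  rw [h1, h2]
  exact card_filter_add_card_filter_not _

lemma swap_out (P : Finset (Finset ι)) (f : ι → ℝ) :
    ∑ s ∈ P, ∑ j ∈ sᶜ, f j
      = ∑ j, ((P.filter (fun s => j ∉ s)).card : ℝ) * f j := by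
  have h : ∀ s : Finset ι, ∑ j ∈ sᶜ, f j = ∑ j ∈ univ, if j ∉ s then f j else 0 := by
    intro s
    rw [← sum_filter]
    congr 1
    ext j; simp
  calc ∑ s ∈ P, ∑ j ∈ sᶜ, f j
      = ∑ s ∈ P, ∑ j ∈ univ, if j ∉ s then f j else 0 := sum_congr rfl fun s _ => h s
    _ = ∑ j ∈ univ, ∑ s ∈ P, if j ∉ s then f j else 0 := sum_comm
    _ = ∑ j, ((P.filter (fun s => j ∉ s)).card : ℝ) * f j := by
        refine sum_congr rfl fun j _ => ?_
        rw [← sum_filter, sum_const, nsmul_eq_mul]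

lemma swap2 (P : Finset (Finset ι)) (y : ι → ℝ) (a b : Finset ι → Finset ι) :
    ∑ s ∈ P, (∑ i ∈ a s, y i) * (∑ j ∈ b s, y j)
      = ∑ i, ∑ j, ((P.filter (fun s => i ∈ a s ∧ j ∈ b s)).card : ℝ) * (y i * y j) := by
  have h : ∀ s : Finset ι, (∑ i ∈ a s, y i) * (∑ j ∈ b s, y j)
      = ∑ i ∈ univ, ∑ j ∈ univ, if i ∈ a s ∧ j ∈ b s then y i * y j else 0 := by
    intro s
    rw [sum_mul_sum]
    have h1 : ∑ i ∈ a s, ∑ j ∈ b s, y i * y j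
        = ∑ i ∈ univ, if i ∈ a s then ∑ j ∈ b s, y i * y j else 0 := by
      rw [sum_ite_mem, univ_inter]
    rw [h1]
    refine sum_congr rfl fun i _ => ?_
    by_cases hi : i ∈ a s
    · simp only [hi, if_true, true_and]
      rw [sum_ite_mem, univ_inter]
    · simp [hi]
  calc ∑ s ∈ P, (∑ i ∈ a s, y i) * (∑ j ∈ b s, y j)
      = ∑ s ∈ P, ∑ i ∈ univ, ∑ j ∈ univ, if i ∈ a s ∧ j ∈ b s then y i * y j else 0 :=
        sum_congr rfl fun s _ => h s
    _ = ∑ i ∈ univ, ∑ s ∈ P, ∑ j ∈ univ, if i ∈ a s ∧ j ∈ b s then y i * y j else 0 := sum_comm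
    _ = ∑ i ∈ univ, ∑ j ∈ univ, ∑ s ∈ P, if i ∈ a s ∧ j ∈ b s then y i * y j else 0 :=
        sum_congr rfl fun i _ => sum_comm
    _ = ∑ i, ∑ j, ((P.filter (fun s => i ∈ a s ∧ j ∈ b s)).card : ℝ) * (y i * y j) := by
        refine sum_congr rfl fun i _ => sum_congr rfl fun j _ => ?_
        rw [← sum_filter, sum_const, nsmul_eq_mul]

end Aux

section Main

variable {ι : Type*} [Fintype ι] [DecidableEq ι]

lemma S1 (N n : ℕ) (hN : Fintype.card ι = N) (y : ι → ℝ) :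
    ∑ s ∈ (univ : Finset ι).powersetCard n, ∑ j ∈ sᶜ, y j ^ 2
      = ((N-1).choose n : ℝ) * ∑ j, y j ^ 2 := by
  rw [swap_out]
  calc ∑ j, (((((univ : Finset ι).powersetCard n).filter (fun s => j ∉ s)).card : ℕ) : ℝ) * y j ^ 2
      = ∑ j, ((N-1).choose n : ℝ) * y j ^ 2 :=
        sum_congr rfl fun j _ => by rw [cout N n hN j]
    _ = _ := by rw [mul_sum]

lemma S4 (N n : ℕ) (hN : Fintype.card ι = N) (hn : 1 ≤ n) (y : ι → ℝ) :
    ∑ s ∈ (univ : Finset ι).powersetCard n, (∑ i ∈ s, y i) ^ 2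
      = (((N-1).choose (n-1) : ℝ) - ((N-2).choose (n-1) : ℝ)) * (∑ i, y i) ^ 2
        + ((N-2).choose (n-1) : ℝ) * ∑ i, y i ^ 2 := by
  have h0 : ∀ s ∈ (univ : Finset ι).powersetCard n,
      (∑ i ∈ s, y i) ^ 2 = (∑ i ∈ s, y i) * (∑ j ∈ s, y j) := fun s _ => sq _
  rw [sum_congr rfl h0, swap2 ((univ : Finset ι).powersetCard n) y (fun s => s) (fun s => s)]
  have key : ∀ i ∈ (univ : Finset ι), ∀ j ∈ (univ : Finset ι),
      ((((univ : Finset ι).powersetCard n).filter (fun s => i ∈ s ∧ j ∈ s)).card : ℝ) * (y i * y j)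
      = (((N-1).choose (n-1) : ℝ) - ((N-2).choose (n-1) : ℝ)) * (y i * y j)
        + (if j = i then ((N-2).choose (n-1) : ℝ) * (y i * y j) else 0) := by
    intro i _ j _
    by_cases h : j = i
    · subst h
      have he : ((univ : Finset ι).powersetCard n).filter (fun s => j ∈ s ∧ j ∈ s)
          = ((univ : Finset ι).powersetCard n).filter (fun s => j ∈ s) := by simp
      rw [he, cin N n hN hn j, if_pos rfl]; ring
    · have hc := cpair N n hN hn (fun e => h e.symm)
      have hcast : ((((univ : Finset ι).powersetCard n).filter (fun s => i ∈ s ∧ j ∈ s)).card : ℝ)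
          = ((N-1).choose (n-1) : ℝ) - ((N-2).choose (n-1) : ℝ) := by
        have := congrArg (Nat.cast (R := ℝ)) hc
        push_cast at this
        linarith
      rw [hcast, if_neg h]; ring
  rw [sum_congr rfl fun i hi => sum_congr rfl fun j hj => key i hi j hj]
  have e1 : ∑ i : ι, ∑ j : ι,
      (((N-1).choose (n-1) : ℝ) - ((N-2).choose (n-1) : ℝ)) * (y i * y j)
      = (((N-1).choose (n-1) : ℝ) - ((N-2).choose (n-1) : ℝ)) * (∑ i, y i) ^ 2 := by
    rw [sq, sum_mul_sum, mul_sum]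
    exact sum_congr rfl fun i _ => by rw [mul_sum]
  have e2 : ∑ i : ι, ∑ j : ι,
      (if j = i then ((N-2).choose (n-1) : ℝ) * (y i * y j) else 0)
      = ((N-2).choose (n-1) : ℝ) * ∑ i, y i ^ 2 := by
    rw [mul_sum]
    refine sum_congr rfl fun i _ => ?_
    rw [Finset.sum_ite_eq' univ i (fun j => ((N-2).choose (n-1) : ℝ) * (y i * y j))]
    simp [sq]
  simp only [sum_add_distrib]
  rw [e1, e2]

lemma S3 (N n : ℕ) (hN : Fintype.card ι = N) (hn : 1 ≤ n) (y : ι → ℝ) :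
    ∑ s ∈ (univ : Finset ι).powersetCard n, (∑ i ∈ s, y i) * (∑ j ∈ sᶜ, y j)
      = ((N-2).choose (n-1) : ℝ) * (∑ i, y i) ^ 2
        - ((N-2).choose (n-1) : ℝ) * ∑ i, y i ^ 2 := by
  rw [swap2 ((univ : Finset ι).powersetCard n) y (fun s => s) (fun s => sᶜ)]
  have key : ∀ i ∈ (univ : Finset ι), ∀ j ∈ (univ : Finset ι),
      ((((univ : Finset ι).powersetCard n).filter (fun s => i ∈ s ∧ j ∈ sᶜ)).card : ℝ) * (y i * y j)
      = ((N-2).choose (n-1) : ℝ) * (y i * y j)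
        - (if j = i then ((N-2).choose (n-1) : ℝ) * (y i * y j) else 0) := by
    intro i _ j _
    have hfe : ((univ : Finset ι).powersetCard n).filter (fun s => i ∈ s ∧ j ∈ sᶜ)
        = ((univ : Finset ι).powersetCard n).filter (fun s => i ∈ s ∧ j ∉ s) := by
      ext s; simp
    by_cases h : j = i
    · subst h
      have he : ((univ : Finset ι).powersetCard n).filter (fun s => j ∈ s ∧ j ∉ s)
          = (∅ : Finset (Finset ι)) := by
        ext s; simp
      rw [hfe, he, if_pos rfl]; simp
    · rw [hfe, cmix N n hN hn (fun e => h e.symm), if_neg h]; ring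
  rw [sum_congr rfl fun i hi => sum_congr rfl fun j hj => key i hi j hj]
  have e1 : ∑ i : ι, ∑ j : ι, ((N-2).choose (n-1) : ℝ) * (y i * y j)
      = ((N-2).choose (n-1) : ℝ) * (∑ i, y i) ^ 2 := by
    rw [sq, sum_mul_sum, mul_sum]
    exact sum_congr rfl fun i _ => by rw [mul_sum]
  have e2 : ∑ i : ι, ∑ j : ι,
      (if j = i then ((N-2).choose (n-1) : ℝ) * (y i * y j) else 0)
      = ((N-2).choose (n-1) : ℝ) * ∑ i, y i ^ 2 := by
    rw [mul_sum]
    refine sum_congr rfl fun i _ => ?_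
    rw [Finset.sum_ite_eq' univ i (fun j => ((N-2).choose (n-1) : ℝ) * (y i * y j))]
    simp [sq]
  simp only [sum_sub_distrib]
  rw [e1, e2]

end Main

/-- Design-based expected out-of-sample loss under SRS without replacement:
`E_p(D_s) = (N-n)(1+1/n) S_y²`. -/
theorem stmt_0 {ι : Type*} [Fintype ι] [DecidableEq ι] (y : ι → ℝ) (N n : ℕ)
    (hN : Fintype.card ι = N) (hn : 1 ≤ n) (hnN : n < N) :
    (∑ s ∈ univ.powersetCard n,
        ((N.choose n : ℝ))⁻¹ * ∑ j ∈ sᶜ, ((∑ i ∈ s, y i) / n - y j) ^ 2)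
      = ((N : ℝ) - n) * (1 + 1 / n) *
        ((∑ i, (y i - (∑ i, y i) / N) ^ 2) / ((N : ℝ) - 1)) := by
  have hn0 : (n : ℝ) ≠ 0 := Nat.cast_ne_zero.mpr (by omega)
  have hN0 : (N : ℝ) ≠ 0 := Nat.cast_ne_zero.mpr (by omega)
  have hN1 : (N : ℝ) - 1 ≠ 0 := by
    have : (2 : ℝ) ≤ N := by exact_mod_cast (by omega : 2 ≤ N)
    linarith
  have hA0 : (N.choose n : ℝ) ≠ 0 :=
    Nat.cast_ne_zero.mpr (Nat.choose_pos hnN.le).ne'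
  have expand : ∀ s ∈ (univ : Finset ι).powersetCard n,
      ∑ j ∈ sᶜ, ((∑ i ∈ s, y i) / n - y j) ^ 2
        = ((N : ℝ) - n) / (n : ℝ) ^ 2 * (∑ i ∈ s, y i) ^ 2
          - 2 / (n : ℝ) * ((∑ i ∈ s, y i) * ∑ j ∈ sᶜ, y j) + ∑ j ∈ sᶜ, y j ^ 2 := by
    intro s hs
    have hcard : ((sᶜ.card : ℕ) : ℝ) = (N : ℝ) - n := by
      rw [card_compl, hN, (mem_powersetCard.mp hs).2, Nat.cast_sub hnN.le]
    have h1 : ∀ j ∈ sᶜ, ((∑ i ∈ s, y i) / n - y j) ^ 2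
        = ((∑ i ∈ s, y i) / n) ^ 2 - (2 * ((∑ i ∈ s, y i) / n)) * y j + y j ^ 2 :=
      fun j _ => by ring
    rw [sum_congr rfl h1, sum_add_distrib, sum_sub_distrib, sum_const, nsmul_eq_mul,
      ← mul_sum, hcard]
    ring
  rw [← mul_sum, sum_congr rfl expand, sum_add_distrib, sum_sub_distrib, ← mul_sum, ← mul_sum,
    S4 N n hN hn y, S3 N n hN hn y, S1 N n hN y]
  have hvar : ∑ i, (y i - (∑ i, y i) / N) ^ 2 = (∑ i, y i ^ 2) - (∑ i, y i) ^ 2 / N := by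
    have h1 : ∀ i ∈ (univ : Finset ι), (y i - (∑ i, y i) / N) ^ 2
        = y i ^ 2 - (2 * ((∑ i, y i) / N)) * y i + ((∑ i, y i) / N) ^ 2 :=
      fun i _ => by ring
    rw [sum_congr rfl h1, sum_add_distrib, sum_sub_distrib, ← mul_sum, sum_const,
      card_univ, hN, nsmul_eq_mul]
    field_simp
    ring
  rw [hvar]
  obtain ⟨m, rfl⟩ : ∃ m, n = m + 1 := ⟨n - 1, by omega⟩
  obtain ⟨K, rfl⟩ : ∃ K, N = K + 2 := ⟨N - 2, by omega⟩
  simp only [show K + 2 - 1 = K + 1 by omega, show K + 2 - 2 = K by omega,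
    show m + 1 - 1 = m by omega]
  have hP : ((K+2).choose (m+1) : ℝ) = ((K+1).choose m : ℝ) + ((K+1).choose (m+1) : ℝ) := by
    exact_mod_cast Nat.choose_succ_succ (K+1) m
  have h2 : ((K : ℝ) + 2) * ((K+1).choose m : ℝ) = ((K+2).choose (m+1) : ℝ) * ((m : ℝ) + 1) := by
    exact_mod_cast Nat.add_one_mul_choose_eq (K+1) m
  have h3 : ((K : ℝ) + 1) * ((K).choose m : ℝ) = ((K+1).choose (m+1) : ℝ) * ((m : ℝ) + 1) := by
    exact_mod_cast Nat.add_one_mul_choose_eq K m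
  have hK2 : (K : ℝ) + 2 ≠ 0 := by positivity
  have hK1 : (K : ℝ) + 1 ≠ 0 := by positivity
  have hB : ((K+1).choose m : ℝ)
      = ((K+2).choose (m+1) : ℝ) * ((m : ℝ) + 1) / ((K : ℝ) + 2) := by
    field_simp
    linarith
  have hC : ((K+1).choose (m+1) : ℝ)
      = ((K+2).choose (m+1) : ℝ) - ((K+2).choose (m+1) : ℝ) * ((m : ℝ) + 1) / ((K : ℝ) + 2) := by
    rw [← hB]; linarith
  have hD : ((K).choose m : ℝ)
      = (((K+2).choose (m+1) : ℝ) - ((K+2).choose (m+1) : ℝ) * ((m : ℝ) + 1) / ((K : ℝ) + 2))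
        * ((m : ℝ) + 1) / ((K : ℝ) + 1) := by
    rw [← hC]
    field_simp
    linarith
  rw [hB, hC, hD]
  push_cast
  push_cast at hn0 hN0 hN1 hA0
  field_simp
  ring
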